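/- arXiv:2210.09816 — 3 statements merged into one kernel-verified Lean document; each statement's English description precedes it below -/
import Mathlib

section
/- For a, b > 0 and ξ ∈ ℝ: (-iξ)·∫₀^∞ e^{isξ}·a·E₁(bs) ds = a·Ln(1 - iξ/b), where E₁(x) = ∫ₓ^∞ e^{-z}/z dz is the exponential integral and Ln denotes the principal branch of the complex logarithm. -/
open Complex MeasureTheory

/-- The exponential integral `E₁(x) = ∫ₓ^∞ e^{-z}/z dz`. -/
noncomputable def expInt (x : ℝ) : ℝ := ∫ z in Set.Ioi x, Real.exp (-z) / z

open Set Filter Topology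

/-! The substitution `u = bst` gives `E₁(bs) = ∫₁^∞ e^{-bst}/t dt`. For `Re z ≤ 0` the integrand
`e^{zs} e^{-bst}/t` is dominated by `e^{-bst}/t`, which is integrable on `(0,∞) × (1,∞)`, so
Fubini turns the Laplace transform `∫₀^∞ e^{zs} E₁(bs) ds` into `∫₁^∞ dt / (t (bt - z))`.
Finally `-z / (t (bt - z))` is the derivative of `-Log(1 - z/(bt))`, which vanishes at infinity
and stays on the principal branch since `Re (1 - z/(bt)) ≥ 1`; this gives `Log(1 - z/b)`, and
the theorem is the case `z = iξ`. -/

lemma expInt_eq_integral_Ioi_one {x : ℝ} (hx : 0 < x) :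
    expInt x = ∫ t in Ioi (1 : ℝ), Real.exp (-(x * t)) / t := by
  have h := integral_comp_mul_left_Ioi (fun z => Real.exp (-z) / z) 1 hx
  rw [mul_one, smul_eq_mul] at h
  calc expInt x = x * ∫ t in Ioi (1 : ℝ), Real.exp (-(x * t)) / (x * t) := by
        rw [h, expInt, mul_inv_cancel_left₀ hx.ne']
    _ = ∫ t in Ioi (1 : ℝ), Real.exp (-(x * t)) / t := by
        rw [← integral_const_mul]
        simp_rw [mul_div_assoc', mul_div_mul_left _ _ hx.ne']

lemma integrableOn_Ioi_inv_sq {c : ℝ} (hc : 0 < c) :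
    IntegrableOn (fun t : ℝ => (t ^ 2)⁻¹) (Ioi c) := by
  refine (integrableOn_Ioi_rpow_of_lt (by norm_num : (-2 : ℝ) < -1) hc).congr_fun
    (fun t ht => ?_) measurableSet_Ioi
  simp only [Real.rpow_neg (hc.trans ht).le, Real.rpow_two]

lemma integral_Ioi_cexp_mul_mul_exp_neg {z : ℂ} {c : ℝ} (hz : z.re < c) :
    ∫ s in Ioi (0 : ℝ), cexp (z * s) * Real.exp (-(c * s)) = (c - z)⁻¹ := by
  have hre : (z - c).re < 0 := by simpa using hz
  calc ∫ s in Ioi (0 : ℝ), cexp (z * s) * Real.exp (-(c * s))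
      = ∫ s in Ioi (0 : ℝ), cexp ((z - c) * s) := by
        congr 1 with s
        rw [ofReal_exp, ← Complex.exp_add]
        push_cast
        ring_nf
    _ = (c - z)⁻¹ := by
        rw [integral_exp_mul_complex_Ioi hre, ofReal_zero, mul_zero, Complex.exp_zero, neg_div,
          ← div_neg, neg_sub, one_div]

section

variable {b : ℝ} {z : ℂ}

lemma integrable_exp_neg_mul_div_prod (hb : 0 < b) :
    Integrable (fun p : ℝ × ℝ => Real.exp (-(b * p.1 * p.2)) / p.2)
      ((volume.restrict (Ioi 0)).prod (volume.restrict (Ioi 1))) := by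
  rw [integrable_prod_iff' (by fun_prop : Measurable _).aestronglyMeasurable]
  constructor
  · filter_upwards [ae_restrict_mem measurableSet_Ioi] with t ht
    simpa [mul_right_comm b] using
      (exp_neg_integrableOn_Ioi 0 (mul_pos hb (zero_lt_one.trans ht))).div_const t
  · refine IntegrableOn.congr_fun ((integrableOn_Ioi_inv_sq one_pos).const_mul b⁻¹)
      (fun t ht => ?_) measurableSet_Ioi
    have ht0 : 0 < t := zero_lt_one.trans ht
    calc b⁻¹ * (t ^ 2)⁻¹ = (∫ s in Ioi (0 : ℝ), Real.exp (-(b * t) * s)) / t := by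
          rw [integral_exp_mul_Ioi (by nlinarith) 0, mul_zero, Real.exp_zero]
          field_simp
      _ = ∫ s in Ioi (0 : ℝ), ‖Real.exp (-(b * s * t)) / t‖ := by
          rw [← integral_div]
          congr 1 with s
          rw [norm_div, Real.norm_of_nonneg (Real.exp_pos _).le, Real.norm_of_nonneg ht0.le,
            neg_mul, mul_right_comm]

lemma integrable_cexp_mul_exp_neg_mul_div_prod (hb : 0 < b) (hz : z.re ≤ 0) :
    Integrable (fun p : ℝ × ℝ => cexp (z * p.1) * (Real.exp (-(b * p.1 * p.2)) / p.2 : ℝ))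
      ((volume.restrict (Ioi 0)).prod (volume.restrict (Ioi 1))) := by
  refine (integrable_exp_neg_mul_div_prod hb).mono'
    (by fun_prop : Measurable _).aestronglyMeasurable ?_
  rw [Measure.prod_restrict]
  filter_upwards [ae_restrict_mem (measurableSet_Ioi.prod measurableSet_Ioi)] with p hp
  obtain ⟨hs, ht⟩ := mem_prod.mp hp
  have hexp : ‖cexp (z * p.1)‖ ≤ 1 := by
    rw [Complex.norm_exp, Real.exp_le_one_iff]
    simpa using mul_nonpos_of_nonpos_of_nonneg hz hs.le
  have hkernel : 0 ≤ Real.exp (-(b * p.1 * p.2)) / p.2 :=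
    div_nonneg (Real.exp_pos _).le (zero_le_one.trans ht.le)
  rw [norm_mul, Complex.norm_real, Real.norm_of_nonneg hkernel]
  exact mul_le_of_le_one_left hkernel hexp

lemma integral_Ioi_cexp_mul_exp_neg_mul_div (hb : 0 < b) (hz : z.re ≤ 0) {t : ℝ} (ht : 0 < t) :
    ∫ s in Ioi (0 : ℝ), cexp (z * s) * (Real.exp (-(b * s * t)) / t : ℝ)
      = (t * (b * t - z))⁻¹ := by
  calc ∫ s in Ioi (0 : ℝ), cexp (z * s) * (Real.exp (-(b * s * t)) / t : ℝ)
      = ∫ s in Ioi (0 : ℝ), (t : ℂ)⁻¹ * (cexp (z * s) * Real.exp (-(b * t * s))) := by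
        congr 1 with s
        push_cast
        ring_nf
    _ = (t * (b * t - z))⁻¹ := by
        rw [integral_const_mul, integral_Ioi_cexp_mul_mul_exp_neg (hz.trans_lt (mul_pos hb ht)),
          mul_inv]
        push_cast
        rfl

theorem integral_cexp_mul_expInt (hb : 0 < b) (hz : z.re ≤ 0) :
    ∫ s in Ioi (0 : ℝ), cexp (z * s) * expInt (b * s)
      = ∫ t in Ioi (1 : ℝ), (t * (b * t - z))⁻¹ := by
  set F : ℝ → ℝ → ℂ := fun s t => cexp (z * s) * (Real.exp (-(b * s * t)) / t : ℝ)
  calc ∫ s in Ioi (0 : ℝ), cexp (z * s) * expInt (b * s)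
      = ∫ s in Ioi (0 : ℝ), ∫ t in Ioi (1 : ℝ), F s t := by
        refine setIntegral_congr_fun measurableSet_Ioi fun s hs => ?_
        rw [expInt_eq_integral_Ioi_one (mul_pos hb hs), ← integral_complex_ofReal,
          ← integral_const_mul]
    _ = ∫ t in Ioi (1 : ℝ), ∫ s in Ioi (0 : ℝ), F s t :=
        integral_integral_swap (integrable_cexp_mul_exp_neg_mul_div_prod hb hz)
    _ = ∫ t in Ioi (1 : ℝ), (t * (b * t - z))⁻¹ :=
        setIntegral_congr_fun measurableSet_Ioi fun t ht =>
          integral_Ioi_cexp_mul_exp_neg_mul_div hb hz (zero_lt_one.trans ht)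

lemma one_sub_div_mul_mem_slitPlane (hb : 0 < b) (hz : z.re ≤ 0) {t : ℝ} (ht : 0 < t) :
    1 - z / (b * t) ∈ slitPlane := by
  refine mem_slitPlane_iff.mpr (Or.inl ?_)
  rw [sub_re, one_re, ← ofReal_mul, div_ofReal_re, sub_pos]
  exact (div_nonpos_of_nonpos_of_nonneg hz (mul_pos hb ht).le).trans_lt one_pos

lemma hasDerivAt_neg_log_one_sub_div_mul (hb : 0 < b) (hz : z.re ≤ 0) {t : ℝ} (ht : 0 < t) :
    HasDerivAt (fun t : ℝ => -log (1 - z / (b * t))) (-z * (t * (b * t - z))⁻¹) t := by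
  have hbt : (b : ℂ) * t ≠ 0 := by exact_mod_cast (mul_pos hb ht).ne'
  have hlin : HasDerivAt (fun s : ℝ => (b : ℂ) * s) b t := by
    simpa using ((hasDerivAt_id (t : ℂ)).const_mul (b : ℂ)).comp_ofReal
  have h := (((hasDerivAt_const t z).div hlin hbt).const_sub 1).clog_real
    (one_sub_div_mul_mem_slitPlane hb hz ht) |>.neg
  refine h.congr_deriv ?_
  have hb0 : (b : ℂ) ≠ 0 := by exact_mod_cast hb.ne'
  simp only [Pi.div_apply, one_sub_div hbt]
  field_simp
  ring

lemma integrableOn_Ioi_one_inv_mul_sub (hb : 0 < b) (hz : z.re ≤ 0) :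
    IntegrableOn (fun t : ℝ => ((t : ℂ) * (b * t - z))⁻¹) (Ioi 1) := by
  refine ((integrableOn_Ioi_inv_sq one_pos).const_mul b⁻¹).mono'
    (by fun_prop : Measurable _).aestronglyMeasurable ?_
  filter_upwards [ae_restrict_mem measurableSet_Ioi] with t ht
  have ht0 : 0 < t := zero_lt_one.trans ht
  have hre : b * t ≤ ‖(b : ℂ) * t - z‖ :=
    (by simp only [sub_re, ← ofReal_mul, ofReal_re]; linarith : b * t ≤ ((b : ℂ) * t - z).re)
      |>.trans (re_le_norm _)
  calc ‖((t : ℂ) * (b * t - z))⁻¹‖ = (t * ‖(b : ℂ) * t - z‖)⁻¹ := by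
        rw [norm_inv, norm_mul, norm_real, Real.norm_of_nonneg ht0.le]
    _ ≤ (t * (b * t))⁻¹ := inv_anti₀ (by positivity) (mul_le_mul_of_nonneg_left hre ht0.le)
    _ = b⁻¹ * (t ^ 2)⁻¹ := by ring

lemma tendsto_neg_log_one_sub_div_mul (hb : 0 < b) :
    Tendsto (fun t : ℝ => -log (1 - z / (b * t))) atTop (𝓝 0) := by
  have hinv : Tendsto (fun t : ℝ => (((b * t)⁻¹ : ℝ) : ℂ)) atTop (𝓝 0) := by
    simpa [Function.comp_def] using (continuous_ofReal.tendsto 0).comp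
      (tendsto_inv_atTop_zero.comp (tendsto_id.const_mul_atTop hb))
  have hdiv : Tendsto (fun t : ℝ => z / (b * t)) atTop (𝓝 0) := by
    simpa [div_eq_mul_inv] using hinv.const_mul z
  simpa using ((tendsto_const_nhds.sub hdiv).clog (by simp : (1 - 0 : ℂ) ∈ slitPlane)).neg

theorem integral_Ioi_one_neg_mul_inv_mul_sub (hb : 0 < b) (hz : z.re ≤ 0) :
    ∫ t in Ioi (1 : ℝ), -z * ((t : ℂ) * (b * t - z))⁻¹ = log (1 - z / b) := by
  rw [integral_Ioi_of_hasDerivAt_of_tendsto'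
    (fun t ht => hasDerivAt_neg_log_one_sub_div_mul hb hz (zero_lt_one.trans_le ht))
    ((integrableOn_Ioi_one_inv_mul_sub hb hz).const_mul (-z))
    (tendsto_neg_log_one_sub_div_mul hb)]
  simp

theorem neg_mul_integral_cexp_mul_expInt (hb : 0 < b) (hz : z.re ≤ 0) :
    -z * ∫ s in Ioi (0 : ℝ), cexp (z * s) * expInt (b * s) = log (1 - z / b) := by
  rw [integral_cexp_mul_expInt hb hz, ← integral_const_mul,
    integral_Ioi_one_neg_mul_inv_mul_sub hb hz]

end

theorem weyl_plus_symbol_general (a b ξ : ℝ) (hb : 0 < b) :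
    (-(Complex.I * ξ)) * ∫ s in Set.Ioi (0 : ℝ), Complex.exp (Complex.I * s * ξ) * (a * expInt (b * s))
      = a * Complex.log (1 - Complex.I * ξ / b) := by
  have hz : (I * ξ).re ≤ 0 := by simp
  simp_rw [mul_left_comm _ (a : ℂ), integral_const_mul, mul_right_comm I _ (ξ : ℂ)]
  rw [mul_left_comm, neg_mul_integral_cexp_mul_expInt hb hz]

theorem weyl_plus_symbol (a b ξ : ℝ) (ha : 0 < a) (hb : 0 < b) :
    (-(Complex.I * ξ)) * ∫ s in Set.Ioi (0 : ℝ), Complex.exp (Complex.I * s * ξ) * (a * expInt (b * s))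
      = a * Complex.log (1 - Complex.I * ξ / b) :=
  weyl_plus_symbol_general a b ξ hb
end

section
/- For a, b > 0 and ξ ∈ ℝ: lim_{γ→0⁺} [(a/2)∫_γ^∞ (e^{iξy} - 1)(e^{-√b·y}/y)dy + (a/2)∫_γ^∞ (e^{-iξy} - 1)(e^{-√b·y}/y)dy] = -(a/2)·ln(1 + ξ²/b). -/
open Complex MeasureTheory Filter Set Topology

/-! The two integrands add up to `2 (cos ξy - 1) e^{-cy} / y` with `c = √b`, which is
integrable near `0`, so the limit is its integral over `(0, ∞)`. Writing
`(1 - cos ξy) / y = ξ ∫₀¹ sin (ξsy) ds` and applying Fubini reduces that integral to the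
Laplace transform `∫₀^∞ e^{-cy} sin (ty) dy = t / (c² + t²)`, the imaginary part of
`1 / (c - it)`, and `∫₀¹ ξ²s / (c² + ξ²s²) ds = ½ log (1 + ξ² / c²)`. -/

theorem tendsto_setIntegral_Ioi_nhdsGT {E : Type*} [NormedAddCommGroup E] [NormedSpace ℝ E]
    {μ : Measure ℝ} {f : ℝ → E} {a : ℝ} (hf : IntegrableOn f (Ioi a) μ) :
    Tendsto (fun γ => ∫ y in Ioi γ, f y ∂μ) (𝓝[>] a) (𝓝 (∫ y in Ioi a, f y ∂μ)) := by
  have hind : ∀ γ ∈ Ioi a, ∫ y in Ioi γ, f y ∂μ = ∫ y in Ioi a, (Ioi γ).indicator f y ∂μ := by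
    intro γ hγ
    rw [setIntegral_indicator measurableSet_Ioi, Ioi_inter_Ioi,
      max_eq_right (le_of_lt (mem_Ioi.1 hγ))]
  refine Tendsto.congr' (eventually_nhdsWithin_of_forall hind |>.mono fun _ h => h.symm) ?_
  refine tendsto_integral_filter_of_dominated_convergence (fun y => ‖f y‖)
    (Eventually.of_forall fun _ => hf.aestronglyMeasurable.indicator measurableSet_Ioi)
    (Eventually.of_forall fun _ => Eventually.of_forall fun _ => norm_indicator_le_norm_self _ _)
    hf.norm ?_
  filter_upwards [ae_restrict_mem measurableSet_Ioi] with y hy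
  refine tendsto_const_nhds.congr' ?_
  filter_upwards [Ioo_mem_nhdsGT hy] with γ hγ
  exact (indicator_of_mem hγ.2 f).symm

theorem mul_intervalIntegral_sin_mul (x : ℝ) :
    x * ∫ s in (0 : ℝ)..1, Real.sin (x * s) = 1 - Real.cos x := by
  rcases eq_or_ne x 0 with rfl | hx
  · simp
  rw [intervalIntegral.integral_comp_mul_left _ hx, integral_sin, smul_eq_mul, mul_zero,
    mul_one, Real.cos_zero, mul_inv_cancel_left₀ hx]

theorem integral_exp_neg_mul_mul_sin_Ioi {c : ℝ} (hc : 0 < c) (t : ℝ) :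
    ∫ y in Ioi 0, Real.exp (-c * y) * Real.sin (t * y) = t / (c ^ 2 + t ^ 2) := by
  have hre : (-c + t * I).re < 0 := by simpa using hc
  calc ∫ y in Ioi 0, Real.exp (-c * y) * Real.sin (t * y)
      = ∫ y : ℝ in Ioi 0, (Complex.exp ((-c + t * I) * y)).im := by
        refine setIntegral_congr_fun measurableSet_Ioi fun y _ => ?_
        simp [Complex.exp_im]
    _ = (∫ y : ℝ in Ioi 0, Complex.exp ((-c + t * I) * y)).im :=
        integral_im (integrableOn_exp_mul_complex_Ioi hre 0)
    _ = t / (c ^ 2 + t ^ 2) := by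
        rw [integral_exp_mul_complex_Ioi hre, ofReal_zero, mul_zero, Complex.exp_zero]
        simp only [div_im, normSq_apply, neg_re, neg_im, one_re, one_im, add_re, add_im, ofReal_re,
          ofReal_im, mul_re, mul_im, I_re, I_im]
        ring

theorem intervalIntegral_mul_div_sq_add_sq {c : ℝ} (hc : c ≠ 0) (ξ : ℝ) :
    ∫ s in (0 : ℝ)..1, ξ * (ξ * s / (c ^ 2 + (ξ * s) ^ 2))
      = Real.log (1 + ξ ^ 2 / c ^ 2) / 2 := by
  have hpos : ∀ s : ℝ, 0 < c ^ 2 + (ξ * s) ^ 2 := fun s => by positivity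
  have hderiv : ∀ s ∈ uIcc (0 : ℝ) 1, HasDerivAt (fun s => Real.log (c ^ 2 + (ξ * s) ^ 2) / 2)
      (ξ * (ξ * s / (c ^ 2 + (ξ * s) ^ 2))) s := by
    intro s _
    have h := ((((hasDerivAt_id s).const_mul ξ).pow 2).const_add (c ^ 2)).log (hpos s).ne'
    refine (h.div_const 2).congr_deriv ?_
    simp only [id_eq, Pi.pow_apply]
    ring
  rw [intervalIntegral.integral_eq_sub_of_hasDerivAt hderiv
    (by apply Continuous.intervalIntegrable; fun_prop (disch := exact fun s => (hpos s).ne'))]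
  rw [one_add_div (pow_ne_zero 2 hc),
    Real.log_div (by simpa using (hpos 1).ne') (pow_ne_zero 2 hc)]
  simp only [mul_one, mul_zero, zero_pow two_ne_zero, add_zero, Real.log_pow]
  ring

section LaplaceFubini

variable (ξ : ℝ) {c : ℝ}

theorem cos_sub_one_mul_exp_neg_div_eq_neg_intervalIntegral {y : ℝ} (hy : y ≠ 0) :
    (Real.cos (ξ * y) - 1) * (Real.exp (-c * y) / y)
      = -∫ s in (0 : ℝ)..1, ξ * (Real.exp (-c * y) * Real.sin (ξ * s * y)) := by
  have h : ξ * ∫ s in (0 : ℝ)..1, Real.sin (ξ * s * y) = (1 - Real.cos (ξ * y)) / y := by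
    rw [eq_div_iff hy, ← mul_intervalIntegral_sin_mul (ξ * y)]
    simp_rw [mul_right_comm ξ _ y]
  rw [intervalIntegral.integral_const_mul, intervalIntegral.integral_const_mul, mul_left_comm, h]
  ring

theorem integrable_exp_neg_mul_mul_sin_prod (hc : 0 < c) :
    Integrable (Function.uncurry fun s y => ξ * (Real.exp (-c * y) * Real.sin (ξ * s * y)))
      ((volume.restrict (uIoc 0 1)).prod (volume.restrict (Ioi 0))) := by
  rw [uIoc_of_le zero_le_one]
  refine Integrable.mono' ((integrable_const |ξ|).mul_prod (exp_neg_integrableOn_Ioi 0 hc))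
    (by apply Continuous.aestronglyMeasurable; fun_prop) (Eventually.of_forall fun p => ?_)
  simp only [Function.uncurry, norm_mul, Real.norm_eq_abs, Real.abs_exp]
  exact mul_le_mul_of_nonneg_left (mul_le_of_le_one_right (Real.exp_pos _).le
    (Real.abs_sin_le_one _)) (abs_nonneg ξ)

theorem integrableOn_cos_sub_one_mul_exp_neg_div (hc : 0 < c) :
    IntegrableOn (fun y => (Real.cos (ξ * y) - 1) * (Real.exp (-c * y) / y)) (Ioi 0) := by
  refine (integrable_exp_neg_mul_mul_sin_prod ξ hc).integral_prod_right.neg.congr ?_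
  filter_upwards [ae_restrict_mem measurableSet_Ioi] with y hy
  rw [cos_sub_one_mul_exp_neg_div_eq_neg_intervalIntegral ξ hy.ne',
    intervalIntegral.integral_of_le zero_le_one, uIoc_of_le zero_le_one]
  rfl

theorem integral_cos_sub_one_mul_exp_neg_div (hc : 0 < c) :
    ∫ y in Ioi 0, (Real.cos (ξ * y) - 1) * (Real.exp (-c * y) / y)
      = -(Real.log (1 + ξ ^ 2 / c ^ 2) / 2) := by
  calc _ = ∫ y in Ioi 0, -∫ s in (0 : ℝ)..1, ξ * (Real.exp (-c * y) * Real.sin (ξ * s * y)) :=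
        setIntegral_congr_fun measurableSet_Ioi fun y hy =>
          cos_sub_one_mul_exp_neg_div_eq_neg_intervalIntegral ξ (ne_of_gt hy)
    _ = -∫ s in (0 : ℝ)..1, ξ * (ξ * s / (c ^ 2 + (ξ * s) ^ 2)) := by
        rw [integral_neg,
          ← intervalIntegral_integral_swap (integrable_exp_neg_mul_mul_sin_prod ξ hc)]
        simp_rw [integral_const_mul, integral_exp_neg_mul_mul_sin_Ioi hc]
    _ = _ := by rw [intervalIntegral_mul_div_sq_add_sq hc.ne']

end LaplaceFubini

theorem integrableOn_exp_neg_mul_div_Ioi {c γ : ℝ} (hc : 0 < c) (hγ : 0 < γ) :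
    IntegrableOn (fun y => Real.exp (-c * y) / y) (Ioi γ) := by
  refine Integrable.mono' ((exp_neg_integrableOn_Ioi γ hc).div_const γ)
    (by fun_prop : Measurable fun y => Real.exp (-c * y) / y).aestronglyMeasurable ?_
  filter_upwards [ae_restrict_mem measurableSet_Ioi] with y hy
  rw [norm_div, Real.norm_eq_abs, Real.norm_eq_abs, Real.abs_exp, abs_of_pos (hγ.trans hy)]
  exact div_le_div_of_nonneg_left (Real.exp_pos _).le hγ (le_of_lt hy)

theorem integral_exp_sub_one_mul_add_integral_exp_neg_sub_one_mul {μ : Measure ℝ} {w : ℝ → ℝ}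
    (hw : Integrable w μ) (ξ : ℝ) :
    (∫ y, (Complex.exp (I * ξ * y) - 1) * (w y : ℂ) ∂μ)
      + ∫ y, (Complex.exp (-(I * ξ * y)) - 1) * (w y : ℂ) ∂μ
      = ((2 * ∫ y, (Real.cos (ξ * y) - 1) * w y ∂μ : ℝ) : ℂ) := by
  have hint : ∀ z : ℝ → ℂ, (∀ y, (z y).re = 0) → Continuous z →
      Integrable (fun y => (Complex.exp (z y) - 1) * (w y : ℂ)) μ := fun z hre hz =>
    hw.ofReal.bdd_mul (c := 2) (by fun_prop : Continuous _).aestronglyMeasurable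
      (Eventually.of_forall fun y =>
        (norm_sub_le _ _).trans (by simp [Complex.norm_exp, hre]; norm_num))
  rw [← integral_add (hint _ (by simp) (by fun_prop)) (hint _ (by simp) (by fun_prop)),
    ← integral_const_mul, ← integral_complex_ofReal]
  congr 1 with y
  have h2cos :
      Complex.exp (I * ξ * y) + Complex.exp (-(I * ξ * y)) = 2 * Complex.cos (ξ * y) := by
    rw [Complex.two_cos]
    ring_nf
  push_cast
  linear_combination (w y : ℂ) * h2cos

theorem compound_poisson_exponent_limit_general (a b ξ : ℝ) (hb : 0 < b) :
    Tendsto (fun γ : ℝ =>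
        (a / 2 : ℂ) * (∫ y in Set.Ioi γ,
            (Complex.exp (Complex.I * ξ * y) - 1) * (Real.exp (-(Real.sqrt b) * y) / y))
        + (a / 2) * ∫ y in Set.Ioi γ,
            (Complex.exp (-(Complex.I * ξ * y)) - 1) * (Real.exp (-(Real.sqrt b) * y) / y))
      (nhdsWithin 0 (Set.Ioi 0))
      (nhds (-(a / 2 * Real.log (1 + ξ ^ 2 / b)) : ℂ)) := by
  have hc : 0 < √b := Real.sqrt_pos.2 hb
  have hlim : Tendsto (fun γ => ∫ y in Ioi γ, (Real.cos (ξ * y) - 1) * (Real.exp (-√b * y) / y))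
      (𝓝[>] 0) (𝓝 (-(Real.log (1 + ξ ^ 2 / b) / 2))) := by
    convert tendsto_setIntegral_Ioi_nhdsGT (integrableOn_cos_sub_one_mul_exp_neg_div ξ hc) using 2
    rw [integral_cos_sub_one_mul_exp_neg_div ξ hc, Real.sq_sqrt hb.le]
  have hsplit : ∀ γ ∈ Ioi (0 : ℝ),
      (a : ℂ) * ↑(∫ y in Ioi γ, (Real.cos (ξ * y) - 1) * (Real.exp (-√b * y) / y))
      = (a / 2 : ℂ) * (∫ y in Ioi γ, (Complex.exp (I * ξ * y) - 1) * (Real.exp (-√b * y) / y))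
        + (a / 2) * ∫ y in Ioi γ, (Complex.exp (-(I * ξ * y)) - 1) * (Real.exp (-√b * y) / y) := by
    intro γ hγ
    simp_rw [← mul_add, ← Complex.ofReal_div,
      integral_exp_sub_one_mul_add_integral_exp_neg_sub_one_mul
        (integrableOn_exp_neg_mul_div_Ioi hc hγ) ξ]
    push_cast
    ring
  convert (((continuous_ofReal.tendsto _).comp hlim).const_mul (a : ℂ)).congr'
    (eventually_nhdsWithin_of_forall hsplit) using 2
  push_cast
  ring

theorem compound_poisson_exponent_limit (a b ξ : ℝ) (ha : 0 < a) (hb : 0 < b) :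
    Tendsto (fun γ : ℝ =>
        (a / 2 : ℂ) * (∫ y in Set.Ioi γ,
            (Complex.exp (Complex.I * ξ * y) - 1) * (Real.exp (-(Real.sqrt b) * y) / y))
        + (a / 2) * ∫ y in Set.Ioi γ,
            (Complex.exp (-(Complex.I * ξ * y)) - 1) * (Real.exp (-(Real.sqrt b) * y) / y))
      (nhdsWithin 0 (Set.Ioi 0))
      (nhds (-(a / 2 * Real.log (1 + ξ ^ 2 / b)) : ℂ)) :=
  compound_poisson_exponent_limit_general a b ξ hb
end

section
/- For a > 0, b > 0 and ξ ∈ ℝ: ∫₀^∞ (cos(ξy) - 1)·(e^{-by}/y) dy = -(1/2)·ln(1 + ξ²/b²). -/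
open Real MeasureTheory Filter Set

/-!
Both sides vanish at `ξ = 0`, so it suffices to compare derivatives in `ξ`. Differentiating under
the integral sign (the `ξ`-derivative of the integrand is dominated by `e^{-by}`) gives
`-∫₀^∞ sin (ξy) e^{-by} dy`, the imaginary part of `-∫₀^∞ e^{(-b + iξ)y} dy = -1 / (b - iξ)`,
that is `-ξ / (b² + ξ²)`, which is also the derivative of `-(1/2) log (1 + ξ²/b²)`.
-/

theorem integral_sin_mul_exp_neg_mul_Ioi (b ξ : ℝ) (hb : 0 < b) :
    ∫ y in Ioi (0 : ℝ), sin (ξ * y) * exp (-b * y) = ξ / (b ^ 2 + ξ ^ 2) := by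
  set a : ℂ := -b + ξ * Complex.I
  have ha : a.re < 0 := by simpa [a] using hb
  have him (y : ℝ) : RCLike.im (Complex.exp (a * y)) = sin (ξ * y) * exp (-b * y) := by
    simp [a, Complex.exp_im, mul_comm]
  simp_rw [← him]
  rw [integral_im (integrableOn_exp_mul_complex_Ioi ha 0), integral_exp_mul_complex_Ioi ha 0]
  have hden : b ^ 2 + ξ ^ 2 ≠ 0 := by positivity
  simp [a, Complex.div_im, Complex.normSq_apply]
  field_simp

theorem integrableOn_cos_sub_one_mul_exp_neg_mul_div (b ξ : ℝ) (hb : 0 < b) :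
    IntegrableOn (fun y => (cos (ξ * y) - 1) * (exp (-b * y) / y)) (Ioi 0) := by
  refine ((exp_neg_integrableOn_Ioi 0 hb).const_mul |ξ|).mono' ?_ ?_
  · exact (ContinuousOn.mul (by fun_prop) <| ContinuousOn.div (by fun_prop) continuousOn_id
      fun y hy => ne_of_gt hy).aestronglyMeasurable measurableSet_Ioi
  · refine (ae_restrict_iff' measurableSet_Ioi).2 (Eventually.of_forall fun y (hy : 0 < y) => ?_)
    have hcos : |cos (ξ * y) - 1| ≤ |ξ| * y := by
      simpa [abs_mul, abs_of_pos hy] using abs_cos_sub_cos_le (ξ * y) 0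
    calc ‖(cos (ξ * y) - 1) * (exp (-b * y) / y)‖
        = |cos (ξ * y) - 1| * (exp (-b * y) / y) := by
          rw [norm_mul, norm_eq_abs, norm_of_nonneg (by positivity)]
      _ ≤ |ξ| * y * (exp (-b * y) / y) := by gcongr
      _ = |ξ| * exp (-b * y) := by field_simp

theorem hasDerivAt_integral_cos_sub_one_mul_exp_neg_mul_div (b ξ : ℝ) (hb : 0 < b) :
    HasDerivAt (fun x => ∫ y in Ioi (0 : ℝ), (cos (x * y) - 1) * (exp (-b * y) / y))
      (-(ξ / (b ^ 2 + ξ ^ 2))) ξ := by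
  have hderiv : ∀ᵐ y ∂(volume.restrict (Ioi (0 : ℝ))), ∀ x ∈ (univ : Set ℝ),
      HasDerivAt (fun x => (cos (x * y) - 1) * (exp (-b * y) / y))
        (-(sin (x * y) * exp (-b * y))) x := by
    refine (ae_restrict_iff' measurableSet_Ioi).2 <|
      Eventually.of_forall fun y (hy : 0 < y) x _ => ?_
    refine ((((hasDerivAt_mul_const y).cos).sub_const 1).mul_const
      (exp (-b * y) / y)).congr_deriv ?_
    field_simp
  have hbound : ∀ᵐ y ∂(volume.restrict (Ioi (0 : ℝ))), ∀ x ∈ (univ : Set ℝ),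
      ‖-(sin (x * y) * exp (-b * y))‖ ≤ exp (-b * y) :=
    Eventually.of_forall fun y x _ => by
      rw [norm_neg, norm_mul, norm_of_nonneg (exp_pos _).le]
      exact mul_le_of_le_one_left (exp_pos _).le (abs_sin_le_one _)
  have h := (hasDerivAt_integral_of_dominated_loc_of_deriv_le univ_mem
    (Eventually.of_forall fun x => (integrableOn_cos_sub_one_mul_exp_neg_mul_div b x hb).1)
    (integrableOn_cos_sub_one_mul_exp_neg_mul_div b ξ hb)
    (by fun_prop : Continuous fun y => -(sin (ξ * y) * exp (-b * y))).aestronglyMeasurable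
    hbound (exp_neg_integrableOn_Ioi 0 hb) hderiv).2
  rwa [integral_neg, integral_sin_mul_exp_neg_mul_Ioi b ξ hb] at h

theorem hasDerivAt_log_one_add_sq_div_sq {b : ℝ} (hb : b ≠ 0) (ξ : ℝ) :
    HasDerivAt (fun x => -(1 / 2) * log (1 + x ^ 2 / b ^ 2)) (-(ξ / (b ^ 2 + ξ ^ 2))) ξ := by
  have hpos : 0 < 1 + ξ ^ 2 / b ^ 2 := by positivity
  refine (((((hasDerivAt_pow 2 ξ).div_const (b ^ 2)).const_add 1).log hpos.ne').const_mul
    (-(1 / 2))).congr_deriv ?_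
  field_simp
  ring

theorem cos_levy_exponent_general (b ξ : ℝ) (hb : 0 < b) :
    ∫ y in Set.Ioi (0 : ℝ), (Real.cos (ξ * y) - 1) * (Real.exp (-b * y) / y)
      = -(1 / 2) * Real.log (1 + ξ ^ 2 / b ^ 2) := by
  have hF := fun x => hasDerivAt_integral_cos_sub_one_mul_exp_neg_mul_div b x hb
  have hG := hasDerivAt_log_one_add_sq_div_sq hb.ne'
  refine isOpen_univ.eqOn_of_deriv_eq isPreconnected_univ
    (fun x _ => (hF x).differentiableAt.differentiableWithinAt)
    (fun x _ => (hG x).differentiableAt.differentiableWithinAt)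
    (fun x _ => (hF x).deriv.trans (hG x).deriv.symm) (mem_univ 0) ?_ (mem_univ ξ)
  simp

theorem cos_levy_exponent (a b ξ : ℝ) (ha : 0 < a) (hb : 0 < b) :
    ∫ y in Set.Ioi (0 : ℝ), (Real.cos (ξ * y) - 1) * (Real.exp (-b * y) / y)
      = -(1 / 2) * Real.log (1 + ξ ^ 2 / b ^ 2) :=
  cos_levy_exponent_general b ξ hb
end
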